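/- Let B be an annihilator nilpotent skew brace. If A is a sub skew brace of B such that A + B² = B (every element of B is a sum a + x with a ∈ A and x ∈ B²), then A = B. Here B² = B*B. -/

import Mathlib

/-!
If every element of `B` is `a + z` with `a ∈ A` and `z ∈ Ann(B)`, then
`(a + z) * (a' + z') = a * a' ∈ A`, so `B² ⊆ A` and `B = A + B² = A`. Applied in the quotient
`B / Annₖ(B)`, whose annihilator is `Annₖ₊₁(B) / Annₖ(B)`, this turns `B = A + Annₖ₊₁(B)` into
`B = A + Annₖ(B)`; descending from `Annₙ(B) = B` gives `B = A + Ann₀(B) = A`.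
-/

/-- A skew brace: a type with two group structures `(B,+)` and `(B,∘)`
(the multiplicative group is written with `*`) sharing the same underlying set,
such that `a ∘ (b + c) = a ∘ b - a + a ∘ c`. -/
class SkewBrace (B : Type*) extends AddGroup B, Group B where
  circ_add : ∀ a b c : B, a * (b + c) = a * b - a + a * c

namespace SkewBrace

variable {B : Type*} [SkewBrace B]

/-- `lam a b = -a + a ∘ b`, i.e. `λ_a(b)`. -/
def lam (a b : B) : B := -a + a * b

/-- `a * b` (the star operation) `= λ_a(b) - b = -a + a ∘ b - b`. -/
def starOp (a b : B) : B := -a + a * b - b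

/-- `X * Y` : the additive subgroup generated by all `x * y`, `x ∈ X`, `y ∈ Y`,
regarded as a set. -/
def starSpan (X Y : Set B) : Set B :=
  (AddSubgroup.closure {z : B | ∃ x ∈ X, ∃ y ∈ Y, z = starOp x y} : AddSubgroup B)

/-- `[X,Y]₊` : the additive subgroup generated by all additive commutators
`x + y - x - y`, `x ∈ X`, `y ∈ Y`, regarded as a set. -/
def addCommSpan (X Y : Set B) : Set B :=
  (AddSubgroup.closure {z : B | ∃ x ∈ X, ∃ y ∈ Y, z = x + y - x - y} : AddSubgroup B)

/-- A sub skew brace: a subset containing `0` and closed under both group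
operations and both inverses. -/
def IsSubSkewBrace (S : Set B) : Prop :=
  0 ∈ S ∧ (∀ a ∈ S, ∀ b ∈ S, a + b ∈ S) ∧ (∀ a ∈ S, -a ∈ S) ∧
    (∀ a ∈ S, ∀ b ∈ S, a * b ∈ S) ∧ (∀ a ∈ S, a⁻¹ ∈ S)

/-- An ideal: a sub skew brace that is normal in `(B,+)` and in `(B,∘)` and
invariant under all `λ_a`. -/
def IsIdeal (S : Set B) : Prop :=
  IsSubSkewBrace S ∧ (∀ a : B, ∀ i ∈ S, a + i - a ∈ S) ∧
    (∀ a : B, ∀ i ∈ S, a * i * a⁻¹ ∈ S) ∧ (∀ a : B, ∀ i ∈ S, lam a i ∈ S)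

/-- The annihilator `Ann(B) = {x | x∘a = a∘x = x+a = a+x for all a}`. -/
def annSet (B : Type*) [SkewBrace B] : Set B :=
  {x | ∀ a : B, x * a = a * x ∧ x * a = x + a ∧ x + a = a + x}

/-- The annihilator series: `Ann₀(B) = 0` and `Ann_{n+1}(B)` is the preimage of
`Ann(B/Annₙ(B))` under the quotient map; membership is expressed via coset
equalities modulo `Annₙ(B)`. -/
def annSeries (B : Type*) [SkewBrace B] : ℕ → Set B
  | 0 => {0}
  | n + 1 => {x | ∀ a : B,
      x * a - a * x ∈ annSeries B n ∧
      x * a - (x + a) ∈ annSeries B n ∧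
      (x + a) - (a + x) ∈ annSeries B n}

/-- `B` is annihilator nilpotent if `Annₙ(B) = B` for some `n`. -/
def AnnNilpotent (B : Type*) [SkewBrace B] : Prop :=
  ∃ n : ℕ, annSeries B n = Set.univ

/-- `leftPow B n` is `B^{n+1}`: `B¹ = B`, `B^{n+1} = B * Bⁿ`. -/
def leftPow (B : Type*) [SkewBrace B] : ℕ → Set B
  | 0 => Set.univ
  | n + 1 => starSpan Set.univ (leftPow B n)

/-- `rightPow B n` is `B⁽ⁿ⁺¹⁾`: `B⁽¹⁾ = B`, `B⁽ⁿ⁺¹⁾ = B⁽ⁿ⁾ * B`. -/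
def rightPow (B : Type*) [SkewBrace B] : ℕ → Set B
  | 0 => Set.univ
  | n + 1 => starSpan (rightPow B n) Set.univ

/-- `B` is left nilpotent if `Bⁿ = 0` for some `n ≥ 1`. -/
def LeftNilpotent (B : Type*) [SkewBrace B] : Prop :=
  ∃ n : ℕ, leftPow B n = ({0} : Set B)

/-- `B` is right nilpotent if `B⁽ⁿ⁾ = 0` for some `n ≥ 1`. -/
def RightNilpotent (B : Type*) [SkewBrace B] : Prop :=
  ∃ n : ℕ, rightPow B n = ({0} : Set B)

/-- `strongPow B n` is `B^[n+1]`: `B^[1] = B`, and `B^[n+1]` is the additive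
subgroup generated by `⋃_{i=1}^{n} B^[i] * B^[n+1-i]`. -/
def strongPow (B : Type*) [SkewBrace B] : ℕ → Set B
  | 0 => Set.univ
  | n + 1 => (AddSubgroup.closure (⋃ j : Fin (n + 1),
      {z : B | ∃ x ∈ strongPow B j.1, ∃ y ∈ strongPow B (n - j.1), z = starOp x y}) :
        AddSubgroup B)
  decreasing_by
  · exact j.isLt
  · omega

/-- `B` is strongly nilpotent if `B^[n] = 0` for some `n ≥ 1`. -/
def StronglyNilpotent (B : Type*) [SkewBrace B] : Prop :=
  ∃ n : ℕ, strongPow B n = ({0} : Set B)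

/-- `gammaAux B n` is `Γ_[n+1](B)`: `Γ_[1](B) = B` and, for `n ≥ 2`, `Γ_[n](B)` is
the additive subgroup generated by the sets `Γ_[i](B) * Γ_[n-i](B)` and
`[Γ_[i](B), Γ_[n-i](B)]₊` for `1 ≤ i ≤ n-1`. -/
def gammaAux (B : Type*) [SkewBrace B] : ℕ → Set B
  | 0 => Set.univ
  | n + 1 => (AddSubgroup.closure (⋃ j : Fin (n + 1),
      {z : B | ∃ x ∈ gammaAux B j.1, ∃ y ∈ gammaAux B (n - j.1),
        z = starOp x y ∨ z = x + y - x - y}) : AddSubgroup B)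
  decreasing_by
  · exact j.isLt
  · omega

/-- `Γ_[n](B)` for `n ≥ 1` (one-based indexing as in the paper). -/
def gammaBr (B : Type*) [SkewBrace B] (n : ℕ) : Set B := gammaAux B (n - 1)

/-- `B` is finitely generated as a skew brace: there is a finite subset whose
smallest containing sub skew brace is `B` itself. -/
def SBFinitelyGenerated (B : Type*) [SkewBrace B] : Prop :=
  ∃ S : Set B, S.Finite ∧ ∀ T : Set B, IsSubSkewBrace T → S ⊆ T → T = Set.univ

/-- `B` satisfies the ascending chain condition on sub skew braces. -/
def ACCSubSkewBrace (B : Type*) [SkewBrace B] : Prop :=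
  ∀ f : ℕ → Set B, (∀ n, IsSubSkewBrace (f n)) → (∀ n, f n ⊆ f (n + 1)) →
    ∃ N : ℕ, ∀ n, N ≤ n → f n = f N

theorem one_eq_zero : (1 : B) = 0 := by
  simpa using circ_add (1 : B) 0 0

theorem zero_circ (a : B) : (0 : B) * a = a := by rw [← one_eq_zero, one_mul]

theorem circ_zero (a : B) : a * (0 : B) = a := by rw [← one_eq_zero, mul_one]

theorem isIdeal_singleton_zero : IsIdeal ({0} : Set B) := by
  refine ⟨⟨rfl, ?_, ?_, ?_, ?_⟩, ?_, ?_, ?_⟩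
  · rintro a rfl b rfl
    exact add_zero 0
  · rintro a rfl
    exact neg_zero
  · rintro a rfl b rfl
    exact zero_circ 0
  · rintro a rfl
    rw [Set.mem_singleton_iff, ← one_eq_zero, inv_one]
  · rintro a i rfl
    simp
  · rintro a i rfl
    rw [Set.mem_singleton_iff, circ_zero, mul_inv_cancel, one_eq_zero]
  · rintro a i rfl
    simp [lam, circ_zero]

section Annihilator

variable {z : B}

theorem ann_mul_eq_add (hz : z ∈ annSet B) (a : B) : z * a = z + a := (hz a).2.1

theorem ann_mul_comm (hz : z ∈ annSet B) (a : B) : z * a = a * z := (hz a).1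

theorem ann_add_comm (hz : z ∈ annSet B) (a : B) : z + a = a + z := (hz a).2.2

theorem mul_ann_eq_add (hz : z ∈ annSet B) (a : B) : a * z = a + z := by
  rw [← ann_mul_comm hz, ann_mul_eq_add hz, ann_add_comm hz]

theorem ann_inv_eq_neg (hz : z ∈ annSet B) : z⁻¹ = -z := by
  refine eq_neg_of_add_eq_zero_right ?_
  rw [← ann_mul_eq_add hz, mul_inv_cancel, one_eq_zero]

theorem zero_mem_annSet : (0 : B) ∈ annSet B := fun a => by
  simp only [zero_circ, circ_zero, zero_add, add_zero, and_self]

theorem add_mem_annSet {x y : B} (hx : x ∈ annSet B) (hy : y ∈ annSet B) : x + y ∈ annSet B := by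
  intro a
  rw [← ann_mul_eq_add hx y]
  refine ⟨?_, ?_, ?_⟩
  · rw [mul_assoc, ann_mul_comm hy, ← mul_assoc, ann_mul_comm hx, mul_assoc]
  · rw [mul_assoc, ann_mul_eq_add hx, ann_mul_eq_add hy, ann_mul_eq_add hx y, add_assoc]
  · rw [ann_mul_eq_add hx y, add_assoc, ann_add_comm hy, ← add_assoc, ann_add_comm hx, add_assoc]

theorem neg_mem_annSet (hz : z ∈ annSet B) : -z ∈ annSet B := by
  intro a
  have hza : z * (z⁻¹ * a) = z + z⁻¹ * a := ann_mul_eq_add hz _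
  rw [mul_inv_cancel_left] at hza
  rw [← ann_inv_eq_neg hz]
  refine ⟨Commute.inv_left (ann_mul_comm hz a), ?_, ?_⟩
  · rw [eq_neg_add_of_add_eq hza.symm, ann_inv_eq_neg hz]
  · rw [ann_inv_eq_neg hz]
    exact AddCommute.neg_left (ann_add_comm hz a)

theorem isIdeal_annSet : IsIdeal (annSet B) := by
  refine ⟨⟨zero_mem_annSet, fun x hx y hy => add_mem_annSet hx hy, fun x hx => neg_mem_annSet hx,
    fun x hx y hy => ?_, fun x hx => ?_⟩, fun a i hi => ?_, fun a i hi => ?_, fun a i hi => ?_⟩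
  · rw [ann_mul_eq_add hx]
    exact add_mem_annSet hx hy
  · rw [ann_inv_eq_neg hx]
    exact neg_mem_annSet hx
  · rwa [← ann_add_comm hi, add_sub_cancel_right]
  · rwa [← ann_mul_comm hi, mul_inv_cancel_right]
  · rwa [lam, mul_ann_eq_add hi, neg_add_cancel_left]

theorem starOp_add_ann {w : B} (hz : z ∈ annSet B) (hw : w ∈ annSet B) (a b : B) :
    starOp (a + z) (b + w) = starOp a b := by
  have hzw : z * w ∈ annSet B := by
    rw [ann_mul_eq_add hz]
    exact add_mem_annSet hz hw
  have hprod : (a + z) * (b + w) = a * b + z + w := by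
    rw [← mul_ann_eq_add hz, ← mul_ann_eq_add hw, mul_assoc, ← mul_assoc z, ann_mul_comm hz,
      mul_assoc, ← mul_assoc, mul_ann_eq_add hzw, ann_mul_eq_add hz, add_assoc]
  have hconj : -z + (-a + a * b) + z = -a + a * b := by
    rw [add_assoc, ← ann_add_comm hz, neg_add_cancel_left]
  simp only [starOp, hprod, sub_eq_add_neg, neg_add_rev, ← add_assoc, add_neg_cancel_right]
  rw [add_assoc (-z) (-a), hconj]

end Annihilator

namespace IsIdeal

variable {I : Set B}

theorem sub_mem_iff_exists_mul (hI : IsIdeal I) {x y : B} : x - y ∈ I ↔ ∃ j ∈ I, x = y * j := by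
  constructor
  · intro h
    obtain ⟨i, hi, rfl⟩ : ∃ i ∈ I, x = y + i :=
      ⟨-y + x, by simpa [sub_eq_add_neg, add_assoc] using hI.2.1 (-y) _ h, by simp⟩
    -- `y⁻¹ ∘ (y + i) = λ_{y⁻¹}(i)`
    refine ⟨y⁻¹ * (y + i), ?_, by group⟩
    rw [circ_add, inv_mul_cancel, one_eq_zero, zero_sub]
    exact hI.2.2.2 y⁻¹ i hi
  · rintro ⟨j, hj, rfl⟩
    simpa [lam] using hI.2.1 y _ (hI.2.2.2 y j hj)

def addCon (hI : IsIdeal I) : AddCon B where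
  r x y := x - y ∈ I
  iseqv := ⟨fun x => by simpa using hI.1.1, fun h => by simpa using hI.1.2.2.1 _ h,
    fun h h' => by simpa using hI.1.2.1 _ h _ h'⟩
  add' {x y x' y'} h h' := by
    simpa [sub_eq_add_neg, add_assoc] using hI.1.2.1 _ (hI.2.1 x _ h') _ h

def con (hI : IsIdeal I) : Con B where
  toSetoid := hI.addCon.toSetoid
  mul' {x y x' y'} h h' := by
    obtain ⟨j, hj, rfl⟩ := hI.sub_mem_iff_exists_mul.1 h
    obtain ⟨j', hj', rfl⟩ := hI.sub_mem_iff_exists_mul.1 h'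
    refine hI.sub_mem_iff_exists_mul.2 ⟨y'⁻¹ * j * y' * j', hI.1.2.2.2.1 _ ?_ _ hj', by group⟩
    simpa using hI.2.2.1 y'⁻¹ j hj

abbrev Quotient (hI : IsIdeal I) : Type _ := hI.addCon.Quotient

instance (hI : IsIdeal I) : SkewBrace hI.Quotient :=
  -- `hI.con` has the same underlying setoid, so its quotient is the same type
  { hI.addCon.addGroup, (hI.con.group : Group hI.Quotient) with
    circ_add := by
      intro a b c
      induction a using AddCon.induction_on
      induction b using AddCon.induction_on
      induction c using AddCon.induction_on
      exact congrArg (fun x : B => (x : hI.Quotient)) (circ_add _ _ _) }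

def mk (hI : IsIdeal I) : B →+ hI.Quotient := hI.addCon.mk'

theorem mk_mul (hI : IsIdeal I) (a b : B) : hI.mk (a * b) = hI.mk a * hI.mk b := rfl

theorem mk_eq_mk (hI : IsIdeal I) {a b : B} : hI.mk a = hI.mk b ↔ a - b ∈ I := hI.addCon.eq

theorem mk_surjective (hI : IsIdeal I) : Function.Surjective hI.mk := AddCon.mk'_surjective

end IsIdeal

section Hom

variable {C : Type*} [SkewBrace C] (f : B →+ C)

theorem map_starOp (hf : ∀ a b, f (a * b) = f a * f b) (a b : B) :
    f (starOp a b) = starOp (f a) (f b) := by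
  simp [starOp, hf]

theorem IsSubSkewBrace.image (hf : ∀ a b, f (a * b) = f a * f b) {A : Set B}
    (hA : IsSubSkewBrace A) : IsSubSkewBrace (f '' A) := by
  refine ⟨⟨0, hA.1, map_zero f⟩, ?_, ?_, ?_, ?_⟩
  · rintro _ ⟨a, ha, rfl⟩ _ ⟨b, hb, rfl⟩
    exact ⟨a + b, hA.2.1 a ha b hb, map_add f a b⟩
  · rintro _ ⟨a, ha, rfl⟩
    exact ⟨-a, hA.2.2.1 a ha, map_neg f a⟩
  · rintro _ ⟨a, ha, rfl⟩ _ ⟨b, hb, rfl⟩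
    exact ⟨a * b, hA.2.2.2.1 a ha b hb, hf a b⟩
  · rintro _ ⟨a, ha, rfl⟩
    exact ⟨a⁻¹, hA.2.2.2.2 a ha, (MonoidHom.mk' f hf).map_inv a⟩

theorem IsIdeal.preimage (hf : ∀ a b, f (a * b) = f a * f b) {S : Set C} (hS : IsIdeal S) :
    IsIdeal (f ⁻¹' S) := by
  obtain ⟨⟨h0, hadd, hneg, hmul, hinv⟩, hconj, hmulconj, hlam⟩ := hS
  have map_inv : ∀ a, f a⁻¹ = (f a)⁻¹ := (MonoidHom.mk' f hf).map_inv
  refine ⟨⟨?_, fun a ha b hb => ?_, fun a ha => ?_, fun a ha b hb => ?_, fun a ha => ?_⟩,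
    fun a i hi => ?_, fun a i hi => ?_, fun a i hi => ?_⟩ <;>
    simp only [Set.mem_preimage, map_zero, map_add, map_neg, map_sub, hf, lam,
      map_inv] at *
  exacts [h0, hadd _ ha _ hb, hneg _ ha, hmul _ ha _ hb, hinv _ ha, hconj _ _ hi,
    hmulconj _ _ hi, hlam _ _ hi]

theorem mapsTo_starSpan (hf : ∀ a b, f (a * b) = f a * f b) {X Y : Set B} {X' Y' : Set C}
    (hX : Set.MapsTo f X X') (hY : Set.MapsTo f Y Y') :
    Set.MapsTo f (starSpan X Y) (starSpan X' Y') := by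
  intro x hx
  refine (show _ ≤ AddSubgroup.comap f (AddSubgroup.closure _) from
    (AddSubgroup.closure_le _).2 ?_) hx
  rintro _ ⟨a, ha, b, hb, rfl⟩
  exact AddSubgroup.subset_closure ⟨f a, hX ha, f b, hY hb, map_starOp f hf a b⟩

end Hom

def IsSubSkewBrace.toAddSubgroup {A : Set B} (hA : IsSubSkewBrace A) : AddSubgroup B where
  carrier := A
  add_mem' ha hb := hA.2.1 _ ha _ hb
  zero_mem' := hA.1
  neg_mem' ha := hA.2.2.1 _ ha

theorem IsSubSkewBrace.starOp_mem {A : Set B} (hA : IsSubSkewBrace A) {a b : B} (ha : a ∈ A)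
    (hb : b ∈ A) : starOp a b ∈ A := by
  rw [starOp, sub_eq_add_neg]
  exact hA.2.1 _ (hA.2.1 _ (hA.2.2.1 a ha) _ (hA.2.2.2.1 a ha b hb)) _ (hA.2.2.1 b hb)

theorem eq_univ_of_add_starSpan_of_add_ann {A : Set B} (hA : IsSubSkewBrace A)
    (hsum : ∀ b : B, ∃ a ∈ A, ∃ x ∈ starSpan (Set.univ : Set B) Set.univ, b = a + x)
    (hann : ∀ b : B, ∃ a ∈ A, ∃ z ∈ annSet B, b = a + z) : A = Set.univ := by
  have hsq : starSpan (Set.univ : Set B) Set.univ ⊆ A := by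
    intro x hx
    refine (AddSubgroup.closure_le hA.toAddSubgroup).2 ?_ hx
    rintro _ ⟨u, -, v, -, rfl⟩
    obtain ⟨a, ha, z, hz, rfl⟩ := hann u
    obtain ⟨b, hb, w, hw, rfl⟩ := hann v
    rw [starOp_add_ann hz hw]
    exact hA.starOp_mem ha hb
  refine Set.eq_univ_of_forall fun b => ?_
  obtain ⟨a, ha, x, hx, rfl⟩ := hsum b
  exact hA.2.1 a ha x (hsq hx)

theorem mem_annSeries_succ_iff {k : ℕ} (hk : IsIdeal (annSeries B k)) {x : B} :
    x ∈ annSeries B (k + 1) ↔ hk.mk x ∈ annSet hk.Quotient := by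
  change (∀ a, _) ↔ ∀ q, _
  rw [hk.mk_surjective.forall]
  simp only [← hk.mk_mul, ← map_add, hk.mk_eq_mk]

theorem isIdeal_annSeries : ∀ k : ℕ, IsIdeal (annSeries B k)
  | 0 => isIdeal_singleton_zero
  | k + 1 => by
    have hk := isIdeal_annSeries k
    convert isIdeal_annSet.preimage hk.mk hk.mk_mul
    exact Set.ext fun x => mem_annSeries_succ_iff hk

theorem exists_add_mem_annSeries_of_succ {A : Set B} (hA : IsSubSkewBrace A)
    (hsum : ∀ b : B, ∃ a ∈ A, ∃ x ∈ starSpan (Set.univ : Set B) Set.univ, b = a + x) {k : ℕ}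
    (hk1 : ∀ b : B, ∃ a ∈ A, ∃ c ∈ annSeries B (k + 1), b = a + c) (b : B) :
    ∃ a ∈ A, ∃ c ∈ annSeries B k, b = a + c := by
  have hk := isIdeal_annSeries (B := B) k
  have himage : hk.mk '' A = Set.univ := by
    refine eq_univ_of_add_starSpan_of_add_ann (hA.image hk.mk hk.mk_mul) (fun q => ?_) fun q => ?_
    · obtain ⟨b, rfl⟩ := hk.mk_surjective q
      obtain ⟨a, ha, x, hx, rfl⟩ := hsum b
      exact ⟨hk.mk a, ⟨a, ha, rfl⟩, hk.mk x, mapsTo_starSpan hk.mk hk.mk_mul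
        (Set.mapsTo_univ _ _) (Set.mapsTo_univ _ _) hx, map_add _ _ _⟩
    · obtain ⟨b, rfl⟩ := hk.mk_surjective q
      obtain ⟨a, ha, c, hc, rfl⟩ := hk1 b
      exact ⟨hk.mk a, ⟨a, ha, rfl⟩, hk.mk c, (mem_annSeries_succ_iff hk).1 hc, map_add _ _ _⟩
  obtain ⟨a, ha, hab⟩ := himage.symm ▸ Set.mem_univ (hk.mk b)
  refine ⟨a, ha, -a + b, ?_, by simp⟩
  simpa [sub_eq_add_neg, add_assoc] using hk.2.1 (-a) _ (hk.mk_eq_mk.1 hab.symm)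

/-- Theorem 5.2: if `B` is an annihilator nilpotent skew brace and `A` is a
sub skew brace with `A + B² = B`, then `A = B`. Here `B² = B * B`. -/
theorem stmt18 {B : Type*} [SkewBrace B] (hann : AnnNilpotent B)
    (A : Set B) (hA : IsSubSkewBrace A)
    (hsum : ∀ b : B, ∃ a ∈ A, ∃ x ∈ starSpan (Set.univ : Set B) Set.univ, b = a + x) :
    A = Set.univ := by
  obtain ⟨n, hn⟩ := hann
  have descend : ∀ k, (∀ b : B, ∃ a ∈ A, ∃ c ∈ annSeries B k, b = a + c) →
      ∀ b : B, ∃ a ∈ A, ∃ c ∈ annSeries B 0, b = a + c := by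
    intro k
    induction k with
    | zero => exact id
    | succ k ih => exact fun h => ih (exists_add_mem_annSeries_of_succ hA hsum h)
  have h0 := descend n fun b => ⟨0, hA.1, b, hn ▸ Set.mem_univ b, (zero_add b).symm⟩
  refine Set.eq_univ_of_forall fun b => ?_
  obtain ⟨a, ha, c, rfl, rfl⟩ := h0 b
  rwa [add_zero]

end SkewBrace
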